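/- Let v be a complex ℓ'×ℓ matrix with ‖v‖ < 1 and let u be a complex ℓ'×ℓ matrix with ‖u‖ ≤ 1 and ‖u‖ = 1. Then F_v(u) := v − (I − v v*)^{1/2} u (I − v* u)^{-1} (I − v* v)^{1/2} is well defined (I − v*u is invertible since ‖v‖ < 1) and ‖F_v(u)‖ = 1; i.e., F_v maps the unit sphere of the closed matrix ball into itself. -/

import Mathlib

open Matrix
open scoped Matrix.Norms.L2Operator ComplexOrder

/-- The square root of a positive semidefinite matrix, as `Matrix.PosSemidef.sqrt` was defined
in the older Mathlib (removed since). -/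
noncomputable def Matrix.PosSemidef.sqrt {n : Type*} [Fintype n] [DecidableEq n]
    {A : Matrix n n ℂ} (hA : A.PosSemidef) : Matrix n n ℂ :=
  hA.1.eigenvectorUnitary.1 * diagonal ((↑) ∘ (fun x : ℝ => Real.sqrt x) ∘ hA.1.eigenvalues) *
    (star hA.1.eigenvectorUnitary : Matrix n n ℂ)

lemma Matrix.PosSemidef.posSemidef_sqrt {n : Type*} [Fintype n] [DecidableEq n]
    {A : Matrix n n ℂ} (hA : A.PosSemidef) : hA.sqrt.PosSemidef := by
  have hD : (diagonal ((↑) ∘ (fun x : ℝ => Real.sqrt x) ∘ hA.1.eigenvalues) :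
      Matrix n n ℂ).PosSemidef := by
    refine Matrix.PosSemidef.diagonal fun i => ?_
    simp only [Function.comp_apply, Pi.zero_apply]
    exact Complex.zero_le_real.2 (Real.sqrt_nonneg _)
  have := hD.mul_mul_conjTranspose_same (hA.1.eigenvectorUnitary.1)
  simpa [Matrix.PosSemidef.sqrt, Matrix.star_eq_conjTranspose] using this

lemma Matrix.PosSemidef.sqrt_mul_self {n : Type*} [Fintype n] [DecidableEq n]
    {A : Matrix n n ℂ} (hA : A.PosSemidef) : hA.sqrt * hA.sqrt = A := by
  set U : Matrix n n ℂ := hA.1.eigenvectorUnitary.1 with hUdef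
  set D : Matrix n n ℂ := diagonal ((↑) ∘ (fun x : ℝ => Real.sqrt x) ∘ hA.1.eigenvalues) with hDdef
  have hU : (star hA.1.eigenvectorUnitary : Matrix n n ℂ) * U = 1 :=
    Unitary.coe_star_mul_self _
  have hd : D * D = diagonal (RCLike.ofReal ∘ hA.1.eigenvalues : n → ℂ) := by
    rw [hDdef, diagonal_mul_diagonal]
    congr 1
    funext i
    simp only [Function.comp_apply]
    rw [← Complex.ofReal_mul, Real.mul_self_sqrt (hA.eigenvalues_nonneg i)]
    rfl
  have e : hA.sqrt * hA.sqrt = U * (D * ((star hA.1.eigenvectorUnitary : Matrix n n ℂ) * U) * D)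
      * (star hA.1.eigenvectorUnitary : Matrix n n ℂ) := by
    simp only [Matrix.PosSemidef.sqrt, hUdef, hDdef, Matrix.mul_assoc]
  conv_rhs => rw [hA.1.spectral_theorem, Unitary.conjStarAlgAut_apply]
  rw [e, hU, Matrix.mul_one, hd]

set_option maxHeartbeats 1000000

noncomputable def en {k : ℕ} (x : Fin k → ℂ) : ℝ := ‖(WithLp.equiv 2 (Fin k → ℂ)).symm x‖

lemma en_nonneg {k : ℕ} (x : Fin k → ℂ) : 0 ≤ en x := norm_nonneg _

lemma en_eq_zero_iff {k : ℕ} (x : Fin k → ℂ) : en x = 0 ↔ x = 0 := by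
  rw [en, norm_eq_zero]
  constructor
  · intro h; simpa using congrArg (WithLp.equiv 2 (Fin k → ℂ)) h
  · rintro rfl; simp

lemma dot_star_self {k : ℕ} (x : Fin k → ℂ) : star x ⬝ᵥ x = ((en x)^2 : ℝ) := by
  have h : en x ^ 2 = ∑ i, ‖x i‖^2 := by
    rw [en, EuclideanSpace.norm_eq]
    rw [Real.sq_sqrt (by positivity)]
    rfl
  rw [h]
  push_cast
  simp [dotProduct, Complex.conj_mul', Complex.sq_norm]

lemma quad_form {a b : ℕ} (M : Matrix (Fin a) (Fin b) ℂ) (x : Fin b → ℂ) :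
    star x ⬝ᵥ ((Mᴴ * M) *ᵥ x) = ((en (M *ᵥ x))^2 : ℝ) := by
  rw [← Matrix.mulVec_mulVec, Matrix.dotProduct_mulVec, ← Matrix.star_mulVec, dot_star_self]

lemma en_mulVec_le {a b : ℕ} (M : Matrix (Fin a) (Fin b) ℂ) (x : Fin b → ℂ) :
    en (M *ᵥ x) ≤ ‖M‖ * en x :=
  M.l2_opNorm_mulVec ((WithLp.equiv 2 (Fin b → ℂ)).symm x)

lemma norm_le_of_bound {a b : ℕ} (M : Matrix (Fin a) (Fin b) ℂ) {c : ℝ} (hc : 0 ≤ c)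
    (h : ∀ x, en (M *ᵥ x) ≤ c * en x) : ‖M‖ ≤ c := by
  rw [Matrix.l2_opNorm_def]
  refine ContinuousLinearMap.opNorm_le_bound _ hc fun y => ?_
  have := h ((WithLp.equiv 2 (Fin b → ℂ)) y)
  simpa [en, Matrix.toEuclideanLin_apply] using this

lemma psd_one_sub {a b : ℕ} (M : Matrix (Fin a) (Fin b) ℂ) (h : ‖M‖ ≤ 1) :
    (1 - Mᴴ * M).PosSemidef := by
  refine Matrix.posSemidef_iff_dotProduct_mulVec.2 ⟨?_, ?_⟩
  · exact Matrix.isHermitian_one.sub (Matrix.isHermitian_conjTranspose_mul_self M)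
  · intro x
    rw [Matrix.sub_mulVec, Matrix.one_mulVec, dotProduct_sub, dot_star_self, quad_form]
    rw [← Complex.ofReal_sub]
    rw [Complex.zero_le_real]
    have h1 : en (M *ᵥ x) ≤ en x := by
      calc en (M *ᵥ x) ≤ ‖M‖ * en x := en_mulVec_le M x
      _ ≤ 1 * en x := by nlinarith [en_nonneg x]
      _ = en x := one_mul _
    nlinarith [en_nonneg x, en_nonneg (M *ᵥ x)]

lemma norm_le_one_of_psd {a b : ℕ} (M : Matrix (Fin a) (Fin b) ℂ)
    (h : (1 - Mᴴ * M).PosSemidef) : ‖M‖ ≤ 1 := by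
  refine norm_le_of_bound M zero_le_one fun x => ?_
  have := h.dotProduct_mulVec_nonneg x
  rw [Matrix.sub_mulVec, Matrix.one_mulVec, dotProduct_sub, dot_star_self, quad_form,
    ← Complex.ofReal_sub, Complex.zero_le_real] at this
  rw [one_mul]
  nlinarith [en_nonneg x, en_nonneg (M *ᵥ x)]

lemma isUnit_one_sub {a : ℕ} (P : Matrix (Fin a) (Fin a) ℂ) (h : ‖P‖ < 1) :
    IsUnit (1 - P) := by
  rw [Matrix.isUnit_iff_isUnit_det, isUnit_iff_ne_zero]
  intro hdet
  obtain ⟨x, hx, hPx⟩ := (Matrix.exists_mulVec_eq_zero_iff).2 hdet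
  rw [Matrix.sub_mulVec, Matrix.one_mulVec, sub_eq_zero] at hPx
  have h1 : en x ≤ ‖P‖ * en x := by
    calc en x = en (P *ᵥ x) := by rw [← hPx]
    _ ≤ ‖P‖ * en x := en_mulVec_le P x
  have h2 : 0 < en x := by
    rcases (en_nonneg x).lt_or_eq with h' | h'
    · exact h'
    · exact absurd ((en_eq_zero_iff x).1 h'.symm) hx
  nlinarith

lemma trace_nonneg_of_psd {a : ℕ} {M : Matrix (Fin a) (Fin a) ℂ} (h : M.PosSemidef) :
    0 ≤ M.trace := by
  rw [Matrix.trace]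
  apply Finset.sum_nonneg
  intro i _
  have := h.dotProduct_mulVec_nonneg (Pi.single i 1)
  simpa [Matrix.mulVec, dotProduct, Pi.single_apply] using this

lemma eq_zero_of_trace_eq_zero {a b : ℕ} {Y : Matrix (Fin a) (Fin b) ℂ}
    (h : (Yᴴ * Y).trace = 0) : Y = 0 := by
  have key : (Yᴴ * Y).trace = ∑ j, star (fun i => Y i j) ⬝ᵥ (fun i => Y i j) := by
    simp [Matrix.trace, Matrix.diag, Matrix.mul_apply, dotProduct, Matrix.conjTranspose_apply]
  rw [key] at h
  have h2 := (Finset.sum_eq_zero_iff_of_nonneg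
    (fun j _ => dotProduct_star_self_nonneg (fun i => Y i j))).1 h
  ext i j
  have := dotProduct_star_self_eq_zero.1 (h2 j (Finset.mem_univ j))
  simpa using congrFun this i

lemma intertwine {l l' : ℕ} (v : Matrix (Fin l') (Fin l) ℂ)
    (h1 : (1 - vᴴ * v).PosSemidef) (h2 : (1 - v * vᴴ).PosSemidef)
    (hA : IsUnit h1.sqrt) : h2.sqrt * v = v * h1.sqrt := by
  set A := h1.sqrt with hAdef
  set B := h2.sqrt with hBdef
  have hA2 : A * A = 1 - vᴴ * v := h1.sqrt_mul_self
  have hB2 : B * B = 1 - v * vᴴ := h2.sqrt_mul_self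
  have hApsd : A.PosSemidef := h1.posSemidef_sqrt
  have hBpsd : B.PosSemidef := h2.posSemidef_sqrt
  set X := B * v - v * A with hXdef
  have key : B * X + X * A = 0 := by
    have : B * X + X * A = B * B * v - v * (A * A) := by
      simp only [hXdef, Matrix.mul_sub, Matrix.sub_mul, Matrix.mul_assoc]
      abel
    rw [this, hA2, hB2, Matrix.sub_mul, Matrix.mul_sub, Matrix.one_mul, Matrix.mul_one,
      Matrix.mul_assoc]
    abel
  have hBX : B * X = -(X * A) := eq_neg_of_add_eq_zero_left key
  -- traces
  have psd1 : (Xᴴ * B * X).PosSemidef := hBpsd.conjTranspose_mul_mul_same X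
  have psd2 : (X * A * Xᴴ).PosSemidef := hApsd.mul_mul_conjTranspose_same X
  have t1 : (Xᴴ * B * X).trace = -((X * A * Xᴴ).trace) := by
    rw [Matrix.mul_assoc Xᴴ, hBX, Matrix.mul_neg, Matrix.trace_neg, neg_inj,
      Matrix.trace_mul_comm]
  have tz : (Xᴴ * B * X).trace = 0 := by
    have n1 := trace_nonneg_of_psd psd1
    have n2 := trace_nonneg_of_psd psd2
    rw [t1] at n1 ⊢
    have : (X * A * Xᴴ).trace = 0 := le_antisymm (by rwa [← neg_nonneg]) n2
    rw [this, neg_zero]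
  -- B X = 0
  have hRX : hBpsd.sqrt * X = 0 := by
    apply eq_zero_of_trace_eq_zero
    have hR : hBpsd.sqrt ᴴ = hBpsd.sqrt := hBpsd.posSemidef_sqrt.1
    rw [← Matrix.mul_assoc, Matrix.conjTranspose_mul, hR, Matrix.mul_assoc (Xᴴ),
      hBpsd.sqrt_mul_self]
    exact tz
  have hBX0 : B * X = 0 := by
    have : B * X = hBpsd.sqrt * (hBpsd.sqrt * X) := by
      rw [← Matrix.mul_assoc, hBpsd.sqrt_mul_self]
    rw [this, hRX, Matrix.mul_zero]
  have hXA0 : X * A = 0 := by rw [← neg_eq_zero, ← hBX, hBX0]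
  have hX0 : X = 0 := by
    have hdet : IsUnit A.det := Matrix.isUnit_iff_isUnit_det A |>.1 hA
    calc X = X * A * A⁻¹ := by rw [Matrix.mul_assoc, Matrix.mul_nonsing_inv _ hdet, Matrix.mul_one]
    _ = 0 := by rw [hXA0, Matrix.zero_mul]
  have := sub_eq_zero.1 hX0
  exact this


lemma bracket {k : ℕ} (s t D E : Matrix (Fin k) (Fin k) ℂ)
    (h1 : (1 - s) * D = 1) (h2 : E * (1 - t) = 1) :
    1 + s * D + E * t + E * (t * s) * D = E * D := by
  have expand : (1-t)*(1-s) + (1-t)*s + t*(1-s) + t*s = (1 : Matrix (Fin k) (Fin k) ℂ) := by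
    noncomm_ring
  have t1 : E*((1-t)*(1-s))*D = 1 := by
    rw [← Matrix.mul_assoc, h2, Matrix.one_mul, h1]
  have t2 : E*((1-t)*s)*D = s*D := by
    rw [← Matrix.mul_assoc, h2, Matrix.one_mul]
  have t3 : E*(t*(1-s))*D = E*t := by
    rw [Matrix.mul_assoc, Matrix.mul_assoc, h1, Matrix.mul_one]
  calc 1 + s*D + E*t + E*(t*s)*D
      = E*((1-t)*(1-s))*D + E*((1-t)*s)*D + E*(t*(1-s))*D + E*(t*s)*D := by
        rw [t1, t2, t3]
    _ = E * ((1-t)*(1-s) + (1-t)*s + t*(1-s) + t*s) * D := by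
        simp only [Matrix.mul_add, Matrix.add_mul]
    _ = E*D := by rw [expand, Matrix.mul_one]

lemma key_identity {l l' : ℕ} (v u : Matrix (Fin l') (Fin l) ℂ)
    (A : Matrix (Fin l) (Fin l) ℂ) (B : Matrix (Fin l') (Fin l') ℂ) (D : Matrix (Fin l) (Fin l) ℂ)
    (hA2 : A * A = 1 - vᴴ * v) (hB2 : B * B = 1 - v * vᴴ)
    (hAH : Aᴴ = A) (hBH : Bᴴ = B)
    (hCD : (1 - vᴴ * u) * D = 1) (hDC : D * (1 - vᴴ * u) = 1)
    (hBv : B * v = v * A) :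
    1 - (v - B * u * D * A)ᴴ * (v - B * u * D * A) = (D * A)ᴴ * (1 - uᴴ * u) * (D * A) := by
  have hvB : vᴴ * B = A * vᴴ := by
    have h := congrArg conjTranspose hBv
    simpa [Matrix.conjTranspose_mul, hAH, hBH] using h
  have hCHDH : Dᴴ * (1 - uᴴ * v) = 1 := by
    have h := congrArg conjTranspose hCD
    simpa [Matrix.conjTranspose_mul, Matrix.conjTranspose_sub] using h
  have hFH : (v - B*u*D*A)ᴴ = vᴴ - A*Dᴴ*uᴴ*B := by
    simp [Matrix.conjTranspose_sub, Matrix.conjTranspose_mul, hAH, hBH, Matrix.mul_assoc]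
  have m1 : vᴴ*(B*u*D*A) = A*vᴴ*u*D*A := by
    have e : vᴴ*(B*u*D*A) = (vᴴ*B)*u*D*A := by simp only [Matrix.mul_assoc]
    rw [e, hvB]
  have m2 : A*Dᴴ*uᴴ*B*v = A*Dᴴ*uᴴ*v*A := by
    rw [Matrix.mul_assoc (A*Dᴴ*uᴴ) B v, hBv, ← Matrix.mul_assoc]
  have m3 : A*Dᴴ*uᴴ*B*(B*u*D*A) = A*Dᴴ*uᴴ*u*D*A - A*Dᴴ*uᴴ*v*vᴴ*u*D*A := by
    have e : A*Dᴴ*uᴴ*B*(B*u*D*A) = (A*Dᴴ*uᴴ)*(B*B)*(u*D*A) := by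
      simp only [Matrix.mul_assoc]
    rw [e, hB2, Matrix.mul_sub, Matrix.sub_mul, Matrix.mul_one]
    congr 1 <;> simp only [Matrix.mul_assoc]
  have step1 : 1 - (v - B*u*D*A)ᴴ * (v - B*u*D*A)
      = 1 - vᴴ*v + A*vᴴ*u*D*A + A*Dᴴ*uᴴ*v*A
        - A*Dᴴ*uᴴ*u*D*A + A*Dᴴ*uᴴ*v*vᴴ*u*D*A := by
    rw [hFH, Matrix.sub_mul, Matrix.mul_sub, Matrix.mul_sub, m1, m2, m3]
    abel
  have hbr : Dᴴ*D = 1 + (vᴴ*u)*D + Dᴴ*(uᴴ*v) + Dᴴ*((uᴴ*v)*(vᴴ*u))*D :=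
    (bracket (vᴴ*u) (uᴴ*v) D Dᴴ hCD hCHDH).symm
  have step2 : (D*A)ᴴ*(1-uᴴ*u)*(D*A)
      = 1 - vᴴ*v + A*vᴴ*u*D*A + A*Dᴴ*uᴴ*v*A
        - A*Dᴴ*uᴴ*u*D*A + A*Dᴴ*uᴴ*v*vᴴ*u*D*A := by
    have e : (D*A)ᴴ*(1-uᴴ*u)*(D*A) = A*(Dᴴ*D)*A - A*Dᴴ*uᴴ*u*D*A := by
      rw [Matrix.conjTranspose_mul, hAH, Matrix.mul_sub, Matrix.sub_mul, Matrix.mul_one]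
      congr 1 <;> simp only [Matrix.mul_assoc]
    rw [e, hbr]
    rw [Matrix.mul_add, Matrix.mul_add, Matrix.mul_add, Matrix.add_mul, Matrix.add_mul,
      Matrix.add_mul, Matrix.mul_one, hA2]
    have e2 : A*((vᴴ*u)*D)*A = A*vᴴ*u*D*A := by simp only [Matrix.mul_assoc]
    have e3 : A*(Dᴴ*(uᴴ*v))*A = A*Dᴴ*uᴴ*v*A := by simp only [Matrix.mul_assoc]
    have e4 : A*(Dᴴ*((uᴴ*v)*(vᴴ*u))*D)*A = A*Dᴴ*uᴴ*v*vᴴ*u*D*A := by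
      simp only [Matrix.mul_assoc]
    rw [e2, e3, e4]
    abel
  rw [step1, step2]

lemma en_single {k : ℕ} (i : Fin k) : en (Pi.single i 1 : Fin k → ℂ) = 1 := by
  have h : (en (Pi.single i 1 : Fin k → ℂ))^2 = 1 := by
    have := dot_star_self (Pi.single i 1 : Fin k → ℂ)
    have h2 : star (Pi.single i 1 : Fin k → ℂ) ⬝ᵥ (Pi.single i 1) = 1 := by
      simp [dotProduct, Pi.single_apply]
    rw [h2] at this
    exact_mod_cast this.symm
  nlinarith [en_nonneg (Pi.single i 1 : Fin k → ℂ)]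

lemma exists_norm_attain {a b : ℕ} (M : Matrix (Fin a) (Fin b) ℂ) (hb : 0 < b) :
    ∃ x : Fin b → ℂ, en x = 1 ∧ en (M *ᵥ x) = ‖M‖ := by
  set T := (Matrix.toEuclideanLin (𝕜 := ℂ) (m := Fin a) (n := Fin b)).trans
    LinearMap.toContinuousLinearMap M with hT
  have hTM : ‖M‖ = ‖T‖ := Matrix.l2_opNorm_def M
  have hTapp : ∀ y : EuclideanSpace ℂ (Fin b),
      T y = (WithLp.equiv 2 (Fin a → ℂ)).symm (M *ᵥ (WithLp.equiv 2 (Fin b → ℂ) y)) := by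
    intro y; rfl
  -- the sphere is nonempty and compact
  set x₀ : EuclideanSpace ℂ (Fin b) :=
    (WithLp.equiv 2 (Fin b → ℂ)).symm (Pi.single ⟨0, hb⟩ 1) with hx₀
  have hx₀n : ‖x₀‖ = 1 := en_single ⟨0, hb⟩
  have hsph : x₀ ∈ Metric.sphere (0 : EuclideanSpace ℂ (Fin b)) 1 := by
    simpa [Metric.mem_sphere] using hx₀n
  obtain ⟨x, hxs, hmax⟩ := (isCompact_sphere (0 : EuclideanSpace ℂ (Fin b)) 1).exists_isMaxOn
    ⟨x₀, hsph⟩ ((continuous_norm.comp T.continuous).continuousOn)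
  have hxn : ‖x‖ = 1 := by simpa [Metric.mem_sphere] using hxs
  have hTle : ‖T‖ ≤ ‖T x‖ := by
    refine ContinuousLinearMap.opNorm_le_bound _ (norm_nonneg _) fun y => ?_
    rcases eq_or_ne y 0 with rfl | hy
    · simp
    · have hyn : (0:ℝ) < ‖y‖ := norm_pos_iff.2 hy
      set z : EuclideanSpace ℂ (Fin b) := ((‖y‖ : ℂ))⁻¹ • y with hz
      have hzn : ‖z‖ = 1 := by
        rw [hz, norm_smul]
        simp [norm_inv, hyn.ne']
      have hzs : z ∈ Metric.sphere (0 : EuclideanSpace ℂ (Fin b)) 1 := by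
        simpa [Metric.mem_sphere] using hzn
      have := hmax hzs
      simp only [Set.mem_setOf_eq, Function.comp_apply] at this
      have hTz : ‖T z‖ = ‖y‖⁻¹ * ‖T y‖ := by
        rw [hz, ContinuousLinearMap.map_smul, norm_smul]
        simp [norm_inv]
      rw [hTz] at this
      calc ‖T y‖ = ‖y‖ * (‖y‖⁻¹ * ‖T y‖) := by field_simp
      _ ≤ ‖y‖ * ‖T x‖ := by
        apply mul_le_mul_of_nonneg_left this hyn.le
      _ = ‖T x‖ * ‖y‖ := mul_comm _ _
  have hTx : ‖T x‖ = ‖T‖ :=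
    le_antisymm (T.unit_le_opNorm x hxn.le) hTle
  refine ⟨(WithLp.equiv 2 (Fin b → ℂ)) x, ?_, ?_⟩
  · show ‖(WithLp.equiv 2 (Fin b → ℂ)).symm _‖ = 1
    rw [Equiv.symm_apply_apply]
    exact hxn
  · show ‖(WithLp.equiv 2 (Fin a → ℂ)).symm _‖ = ‖M‖
    rw [hTM, ← hTx, hTapp]

noncomputable def Fv {l l' : ℕ} (v : Matrix (Fin l') (Fin l) ℂ)
    (h1 : (1 - vᴴ * v).PosSemidef) (h2 : (1 - v * vᴴ).PosSemidef)
    (u : Matrix (Fin l') (Fin l) ℂ) : Matrix (Fin l') (Fin l) ℂ :=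
  v - h2.sqrt * u * (1 - vᴴ * u)⁻¹ * h1.sqrt

theorem stmt_17 (l l' : ℕ) (v u : Matrix (Fin l') (Fin l) ℂ)
    (hv : ‖v‖ < 1) (hu1 : ‖u‖ ≤ 1) (hu : ‖u‖ = 1)
    (h1 : (1 - vᴴ * v).PosSemidef) (h2 : (1 - v * vᴴ).PosSemidef) :
    ‖Fv v h1 h2 u‖ = 1 := by
  have hv0 : 0 ≤ ‖v‖ := norm_nonneg v
  have hvH : ‖vᴴ‖ = ‖v‖ := v.l2_opNorm_conjTranspose
  have hCnorm : ‖vᴴ * u‖ < 1 := by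
    calc ‖vᴴ * u‖ ≤ ‖vᴴ‖ * ‖u‖ := Matrix.l2_opNorm_mul _ _
    _ = ‖v‖ := by rw [hvH, hu, mul_one]
    _ < 1 := hv
  have hCu : IsUnit (1 - vᴴ * u) := isUnit_one_sub _ hCnorm
  have hCdet : IsUnit (1 - vᴴ * u).det := (Matrix.isUnit_iff_isUnit_det _).1 hCu
  set D := (1 - vᴴ * u)⁻¹ with hD
  have hCD : (1 - vᴴ * u) * D = 1 := Matrix.mul_nonsing_inv _ hCdet
  have hDC : D * (1 - vᴴ * u) = 1 := Matrix.nonsing_inv_mul _ hCdet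
  have hAAnorm : ‖vᴴ * v‖ < 1 := by
    calc ‖vᴴ * v‖ ≤ ‖vᴴ‖ * ‖v‖ := Matrix.l2_opNorm_mul _ _
    _ = ‖v‖ * ‖v‖ := by rw [hvH]
    _ < 1 := by nlinarith
  have hU1 : IsUnit (1 - vᴴ * v) := isUnit_one_sub _ hAAnorm
  set A := h1.sqrt with hAset
  have hA2 : A * A = 1 - vᴴ * v := h1.sqrt_mul_self
  have hAunit : IsUnit A := by
    rw [Matrix.isUnit_iff_isUnit_det] at hU1 ⊢
    rw [← hA2, Matrix.det_mul] at hU1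
    exact isUnit_of_mul_isUnit_left hU1
  have hAH : Aᴴ = A := h1.posSemidef_sqrt.1
  have hBH : (h2.sqrt)ᴴ = h2.sqrt := h2.posSemidef_sqrt.1
  have hBv : h2.sqrt * v = v * A := intertwine v h1 h2 hAunit
  have hF : Fv v h1 h2 u = v - h2.sqrt * u * D * A := rfl
  have keyid := key_identity v u A h2.sqrt D hA2 h2.sqrt_mul_self hAH hBH hCD hDC hBv
  rw [← hF] at keyid
  set F := Fv v h1 h2 u with hFset
  have psd_u : (1 - uᴴ * u).PosSemidef := psd_one_sub u hu1
  have psdF : (1 - Fᴴ * F).PosSemidef := by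
    rw [keyid]; exact psd_u.conjTranspose_mul_mul_same (D * A)
  have hle : ‖F‖ ≤ 1 := norm_le_one_of_psd F psdF
  -- lower bound
  have hl : 0 < l := by
    by_contra h
    push_neg at h
    have hl0 : l = 0 := by omega
    subst hl0
    have hu0 : u = 0 := by ext i j; exact j.elim0
    rw [hu0, norm_zero] at hu
    exact zero_ne_one hu
  obtain ⟨x, hx1, hx2⟩ := exists_norm_attain u hl
  rw [hu] at hx2
  have hq : star x ⬝ᵥ ((1 - uᴴ * u) *ᵥ x) = 0 := by
    rw [Matrix.sub_mulVec, Matrix.one_mulVec, dotProduct_sub, dot_star_self, quad_form,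
      hx1, hx2]
    norm_num
  have hker : (1 - uᴴ * u) *ᵥ x = 0 := (psd_u.dotProduct_mulVec_zero_iff x).1 hq
  have hAdet : IsUnit A.det := (Matrix.isUnit_iff_isUnit_det A).1 hAunit
  set z := A⁻¹ *ᵥ ((1 - vᴴ * u) *ᵥ x) with hzdef
  have hmat : ((D * A) * A⁻¹) * (1 - vᴴ * u) = 1 := by
    rw [Matrix.mul_assoc D A A⁻¹, Matrix.mul_nonsing_inv _ hAdet, Matrix.mul_one, hDC]
  have hDAz : (D * A) *ᵥ z = x := by
    rw [hzdef, Matrix.mulVec_mulVec, Matrix.mulVec_mulVec, hmat, Matrix.one_mulVec]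
  have hzne : z ≠ 0 := by
    intro h0
    rw [h0, Matrix.mulVec_zero] at hDAz
    rw [← hDAz] at hx1
    rw [(en_eq_zero_iff (0 : Fin l → ℂ)).2 rfl] at hx1
    exact zero_ne_one hx1
  have hFz : (1 - Fᴴ * F) *ᵥ z = 0 := by
    rw [keyid, ← Matrix.mulVec_mulVec, ← Matrix.mulVec_mulVec, hDAz, hker, Matrix.mulVec_zero]
  have hquad : star z ⬝ᵥ ((1 - Fᴴ * F) *ᵥ z) = 0 := by rw [hFz, dotProduct_zero]
  have hEn : (en z)^2 = (en (F *ᵥ z))^2 := by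
    rw [Matrix.sub_mulVec, Matrix.one_mulVec, dotProduct_sub, dot_star_self, quad_form,
      ← Complex.ofReal_sub] at hquad
    have h' : (en z)^2 - (en (F *ᵥ z))^2 = 0 := by exact_mod_cast hquad
    linarith
  have hz0 : 0 < en z := lt_of_le_of_ne (en_nonneg z)
    (fun h => hzne ((en_eq_zero_iff z).1 h.symm))
  have hge : 1 ≤ ‖F‖ := by
    have hle2 := en_mulVec_le F z
    have hFz_eq : en (F *ᵥ z) = en z := by
      rw [← Real.sqrt_sq (en_nonneg (F *ᵥ z)), ← Real.sqrt_sq (en_nonneg z), hEn]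
    have h1z : 1 * en z ≤ ‖F‖ * en z := by
      calc 1 * en z = en (F *ᵥ z) := by rw [one_mul, hFz_eq]
      _ ≤ ‖F‖ * en z := hle2
    exact le_of_mul_le_mul_right h1z hz0
  exact le_antisymm hle hge
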